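/- arXiv:1312.2732 — 2 statements merged into one kernel-verified Lean document; each statement's English description precedes it below -/
import Mathlib

section
/- Let K be a field, G = GL(2,K), and H the subgroup of invertible diagonal matrices of G. Then the elements e (the identity matrix), w₀ = [[0,−1],[1,0]], u = [[1,1],[0,1]], ū = [[1,0],[1,1]], u·w₀ = [[1,−1],[1,0]], ū·w₀ = [[0,−1],[1,−1]], together with δ_b = [[1+b⁻¹,1],[1,1]] for b ranging over K^× ∖ {−1}, form a complete system of representatives of the double coset space H\G/H: every g ∈ G lies in the double coset HδH of exactly one element δ of this list, and δ_b, δ_{b'} lie in the same double coset only if b = b'. -/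
/-! The diagonal torus acts by scaling rows and columns, `A i j ↦ s i * A i j * u j`. This
preserves which entries of `A` vanish and, when none does, the ratio
`A 0 0 * A 1 1 / (A 0 1 * A 1 0)`, which is never `1` since `det A ≠ 0`. For each zero pattern
an explicit scaling moves an invertible `A` onto the listed representative with that pattern
(onto `δ_b` with `1 + b⁻¹` equal to the ratio in the generic case), so the representative is a
function of the invariants, hence unique. -/

open Matrix

/-- The double coset relation `A ∈ H M H`, where `H` is the subgroup of invertible
diagonal matrices of `G = GL(2,K)`: there are invertible diagonal matrices `h₁, h₂`
with `A = h₁ * M * h₂`. -/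
def SameDoubleCoset {K : Type*} [Field K] (A M : Matrix (Fin 2) (Fin 2) K) : Prop :=
  ∃ h₁ h₂ : GL (Fin 2) K,
    (h₁ : Matrix (Fin 2) (Fin 2) K) 0 1 = 0 ∧ (h₁ : Matrix (Fin 2) (Fin 2) K) 1 0 = 0 ∧
    (h₂ : Matrix (Fin 2) (Fin 2) K) 0 1 = 0 ∧ (h₂ : Matrix (Fin 2) (Fin 2) K) 1 0 = 0 ∧
    A = (h₁ : Matrix (Fin 2) (Fin 2) K) * M * h₂

section

variable {K : Type*} [Field K]

theorem Matrix.GeneralLinearGroup.exists_eq_diagonal_of_fin_two (g : GL (Fin 2) K)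
    (h01 : (g : Matrix (Fin 2) (Fin 2) K) 0 1 = 0)
    (h10 : (g : Matrix (Fin 2) (Fin 2) K) 1 0 = 0) :
    ∃ d : Fin 2 → K, (∀ i, d i ≠ 0) ∧ (g : Matrix (Fin 2) (Fin 2) K) = diagonal d := by
  have hdet := g.det_ne_zero
  rw [det_fin_two, h01, h10, mul_zero, sub_zero] at hdet
  refine ⟨fun i => g i i,
    Fin.forall_fin_two.2 ⟨left_ne_zero_of_mul hdet, right_ne_zero_of_mul hdet⟩, ?_⟩
  ext i j
  fin_cases i <;> fin_cases j <;> simp [h01, h10]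

theorem sameDoubleCoset_iff {A M : Matrix (Fin 2) (Fin 2) K} :
    SameDoubleCoset A M ↔
      ∃ s u : Fin 2 → K, (∀ i, s i ≠ 0) ∧ (∀ j, u j ≠ 0) ∧
        ∀ i j, A i j = s i * M i j * u j := by
  constructor
  · rintro ⟨h₁, h₂, h₁01, h₁10, h₂01, h₂10, rfl⟩
    obtain ⟨s, hs, hs'⟩ := GeneralLinearGroup.exists_eq_diagonal_of_fin_two h₁ h₁01 h₁10
    obtain ⟨u, hu, hu'⟩ := GeneralLinearGroup.exists_eq_diagonal_of_fin_two h₂ h₂01 h₂10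
    refine ⟨s, u, hs, hu, fun i j => ?_⟩
    rw [hs', hu', mul_diagonal, diagonal_mul]
  · rintro ⟨s, u, hs, hu, h⟩
    have isUnit_det {d : Fin 2 → K} (hd : ∀ i, d i ≠ 0) : IsUnit (diagonal d).det := by
      simpa [det_diagonal, Fin.prod_univ_two] using mul_ne_zero (hd 0) (hd 1)
    refine ⟨nonsingInvUnit _ (isUnit_det hs), nonsingInvUnit _ (isUnit_det hu),
      rfl, rfl, rfl, rfl, ?_⟩
    ext i j
    simp [nonsingInvUnit, mul_diagonal, diagonal_mul, h]

-- Junk value `0` when an off-diagonal entry vanishes.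
noncomputable def crossRatio (A : Matrix (Fin 2) (Fin 2) K) : K :=
  A 0 0 * A 1 1 / (A 0 1 * A 1 0)

theorem crossRatio_ne_one {A : Matrix (Fin 2) (Fin 2) K} (hA : A.det ≠ 0) :
    crossRatio A ≠ 1 := by
  rw [det_fin_two, sub_ne_zero] at hA
  by_cases h : A 0 1 * A 1 0 = 0
  · simp [crossRatio, h]
  · rwa [crossRatio, Ne, div_eq_one_iff_eq h]

namespace SameDoubleCoset

variable {A M : Matrix (Fin 2) (Fin 2) K}

theorem apply_eq_zero_iff (h : SameDoubleCoset A M) (i j : Fin 2) : A i j = 0 ↔ M i j = 0 := by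
  obtain ⟨s, u, hs, hu, hA⟩ := sameDoubleCoset_iff.1 h
  simp [hA, hs, hu]

theorem crossRatio_eq (h : SameDoubleCoset A M) : crossRatio A = crossRatio M := by
  obtain ⟨s, u, hs, hu, hA⟩ := sameDoubleCoset_iff.1 h
  have hsu : s 0 * s 1 * u 0 * u 1 ≠ 0 := by simp [hs, hu]
  calc crossRatio A
      = M 0 0 * M 1 1 * (s 0 * s 1 * u 0 * u 1) /
          (M 0 1 * M 1 0 * (s 0 * s 1 * u 0 * u 1)) := by
        simp only [crossRatio, hA]; ring
    _ = crossRatio M := mul_div_mul_right _ _ hsu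

end SameDoubleCoset

theorem one_add_inv_ne_zero {R : Type*} [DivisionRing R] {b : R} (hb : b ≠ -1) :
    1 + b⁻¹ ≠ 0 := by
  rw [Ne, add_eq_zero_iff_neg_eq, eq_comm, inv_eq_iff_eq_inv, inv_neg, inv_one]
  exact hb

def doubleCosetReps : Set (Matrix (Fin 2) (Fin 2) K) :=
  ({!![1, 0; 0, 1], !![0, -1; 1, 0], !![1, 1; 0, 1], !![1, 0; 1, 1],
      !![1, -1; 1, 0], !![0, -1; 1, -1]} : Set (Matrix (Fin 2) (Fin 2) K)) ∪
    {N : Matrix (Fin 2) (Fin 2) K | ∃ b : K, b ≠ 0 ∧ b ≠ -1 ∧ N = !![1 + b⁻¹, 1; 1, 1]}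

open Classical in
noncomputable def doubleCosetRep (A : Matrix (Fin 2) (Fin 2) K) : Matrix (Fin 2) (Fin 2) K :=
  if A 0 1 = 0 then (if A 1 0 = 0 then !![1, 0; 0, 1] else !![1, 0; 1, 1])
  else if A 1 0 = 0 then !![1, 1; 0, 1]
  else if A 0 0 = 0 then (if A 1 1 = 0 then !![0, -1; 1, 0] else !![0, -1; 1, -1])
  else if A 1 1 = 0 then !![1, -1; 1, 0]
  else !![crossRatio A, 1; 1, 1]

theorem SameDoubleCoset.doubleCosetRep_eq {A M : Matrix (Fin 2) (Fin 2) K}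
    (h : SameDoubleCoset A M) : doubleCosetRep A = doubleCosetRep M := by
  classical
  unfold doubleCosetRep
  simp only [h.apply_eq_zero_iff, h.crossRatio_eq]

theorem doubleCosetRep_eq_self {M : Matrix (Fin 2) (Fin 2) K} (hM : M ∈ doubleCosetReps) :
    doubleCosetRep M = M := by
  simp only [doubleCosetReps, Set.mem_union, Set.mem_insert_iff, Set.mem_singleton_iff] at hM
  rcases hM with (rfl | rfl | rfl | rfl | rfl | rfl) | ⟨b, -, hb, rfl⟩ <;>
    simp [doubleCosetRep, crossRatio]
  exact if_neg (one_add_inv_ne_zero hb)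

theorem doubleCosetRep_mem_doubleCosetReps {A : Matrix (Fin 2) (Fin 2) K} (hA : A.det ≠ 0) :
    doubleCosetRep A ∈ doubleCosetReps := by
  unfold doubleCosetRep
  split_ifs with h01 h10 h10 h00 h11 h11
  rotate_right
  · have hr : crossRatio A ≠ 0 := div_ne_zero (mul_ne_zero h00 h11) (mul_ne_zero h01 h10)
    have hr1 : crossRatio A - 1 ≠ 0 := sub_ne_zero.2 (crossRatio_ne_one hA)
    refine Or.inr ⟨(crossRatio A - 1)⁻¹, inv_ne_zero hr1, ?_,
      by rw [inv_inv, add_sub_cancel]⟩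
    rwa [Ne, inv_eq_iff_eq_inv, inv_neg, inv_one, sub_eq_neg_self]
  all_goals simp [doubleCosetReps]

theorem sameDoubleCoset_doubleCosetRep {A : Matrix (Fin 2) (Fin 2) K} (hA : A.det ≠ 0) :
    SameDoubleCoset A (doubleCosetRep A) := by
  obtain ⟨a, b, c, d, rfl⟩ : ∃ a b c d, A = !![a, b; c, d] := ⟨_, _, _, _, eta_fin_two A⟩
  rw [det_fin_two_of] at hA
  unfold doubleCosetRep
  split_ifs with hb hc hc ha hd hd <;>
    simp only [of_apply, cons_val', cons_val_zero, cons_val_one, empty_val', cons_val_fin_one] at *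
  · refine sameDoubleCoset_iff.2 ⟨![a, d], ![1, 1], ?_, ?_, ?_⟩ <;>
      simp_all [Fin.forall_fin_two]
  · refine sameDoubleCoset_iff.2 ⟨![a, c], ![1, d / c], ?_, ?_, ?_⟩ <;>
      simp_all [Fin.forall_fin_two, mul_div_cancel₀]
  · refine sameDoubleCoset_iff.2 ⟨![b, d], ![a / b, 1], ?_, ?_, ?_⟩ <;>
      simp_all [Fin.forall_fin_two, mul_div_cancel₀]
  · refine sameDoubleCoset_iff.2 ⟨![-b, c], ![1, 1], ?_, ?_, ?_⟩ <;>
      simp_all [Fin.forall_fin_two]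
  · refine sameDoubleCoset_iff.2 ⟨![-b, -d], ![-c / d, 1], ?_, ?_, ?_⟩ <;>
      simp_all [Fin.forall_fin_two, mul_div_cancel₀]
  · refine sameDoubleCoset_iff.2 ⟨![a, c], ![1, -b / a], ?_, ?_, ?_⟩ <;>
      simp_all [Fin.forall_fin_two, mul_div_cancel₀]
  · refine sameDoubleCoset_iff.2 ⟨![b, d], ![c / d, 1], ?_, ?_, ?_⟩ <;>
      simp_all [Fin.forall_fin_two, crossRatio, mul_div_cancel₀]
    field_simp

end

theorem double_coset_representatives (K : Type*) [Field K] :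
    (∀ g : GL (Fin 2) K,
      ∃! M : Matrix (Fin 2) (Fin 2) K,
        (M ∈ ({!![1, 0; 0, 1], !![0, -1; 1, 0], !![1, 1; 0, 1], !![1, 0; 1, 1],
                !![1, -1; 1, 0], !![0, -1; 1, -1]} : Set (Matrix (Fin 2) (Fin 2) K)) ∪
              {N : Matrix (Fin 2) (Fin 2) K |
                ∃ b : K, b ≠ 0 ∧ b ≠ -1 ∧ N = !![1 + b⁻¹, 1; 1, 1]}) ∧
        SameDoubleCoset (g : Matrix (Fin 2) (Fin 2) K) M) ∧
    (∀ b b' : K, b ≠ 0 → b ≠ -1 → b' ≠ 0 → b' ≠ -1 →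
      SameDoubleCoset (!![1 + b⁻¹, 1; 1, 1] : Matrix (Fin 2) (Fin 2) K)
        !![1 + b'⁻¹, 1; 1, 1] → b = b') := by
  refine ⟨fun g => ⟨doubleCosetRep g, ⟨doubleCosetRep_mem_doubleCosetReps g.det_ne_zero,
    sameDoubleCoset_doubleCosetRep g.det_ne_zero⟩, ?_⟩, ?_⟩
  · rintro M ⟨hM, hgM⟩
    exact (doubleCosetRep_eq_self hM).symm.trans hgM.doubleCosetRep_eq.symm
  · intro b b' _ _ _ _ h
    simpa [crossRatio] using h.crossRatio_eq
end

section
/- Let p be a prime number and let φ : (0, 2π/log p) → (−2,2) be the map φ(y) = 2·cos((y·log p)/2). Define the density f(y) = (log p)/(4π) · (2 − 2cos(y·log p)) · (1 − p^{−1}) / (1 − p^{−1/2}·φ(y) + p^{−1})² for y ∈ (0, 2π/log p), and the density g(x) = (p−1)/(2π) · √(4−x²) / (p^{1/2} + p^{−1/2} − x)² for x ∈ (−2,2). Then the pushforward under φ of the measure f(y)·dy on (0, 2π/log p) equals the measure g(x)·dx on (−2,2). -/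
open MeasureTheory Real Set

/-!
Substitute `x = 2 cos θ` with `θ = y log p / 2 ∈ (0, π)`. Then `|dx/dy| = log p · sin θ`,
`√(4 - x²) = 2 sin θ`, `2 - 2 cos (y log p) = 4 sin² θ`, and, writing `q = p^{1/2}`,
`1 - q⁻¹ x + q⁻² = q⁻¹ (q + q⁻¹ - x)`; with these the Jacobian times the
Ramakrishnan–Rogawski density is exactly the local spectral density.
-/

theorem map_withDensity_restrict_eq_of_bijOn {φ φ' : ℝ → ℝ} {s t : Set ℝ} {f g : ℝ → ENNReal}
    (hs : MeasurableSet s) (hφ : Measurable φ) (hφ' : ∀ y ∈ s, HasDerivWithinAt φ (φ' y) s y)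
    (hbij : BijOn φ s t) (hfg : ∀ y ∈ s, f y = ENNReal.ofReal |φ' y| * g (φ y)) :
    Measure.map φ ((volume.restrict s).withDensity f) = (volume.restrict t).withDensity g := by
  refine Measure.ext fun A hA => ?_
  have hsA : MeasurableSet (s ∩ φ ⁻¹' A) := hs.inter (hφ hA)
  rw [Measure.map_apply hφ hA, withDensity_apply _ (hφ hA), withDensity_apply _ hA,
    Measure.restrict_restrict (hφ hA), Measure.restrict_restrict hA, ← hbij.image_eq,
    inter_comm (φ ⁻¹' A), inter_comm A, ← image_inter_preimage,
    lintegral_image_eq_lintegral_abs_deriv_mul hsA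
      (fun y hy => (hφ' y hy.1).mono inter_subset_left) (hbij.injOn.mono inter_subset_left)]
  exact setLIntegral_congr_fun hsA fun y hy => hfg y hy.1

theorem bijOn_mul_div_two_Ioo {L : ℝ} (hL : 0 < L) :
    BijOn (fun y => y * L / 2) (Ioo 0 (2 * π / L)) (Ioo 0 π) := by
  have := (mul_left_injective₀ (by positivity : L / 2 ≠ 0)).injOn.bijOn_image
    (s := Ioo 0 (2 * π / L))
  rw [image_mul_right_Ioo _ _ (by positivity)] at this
  field_simp at this
  simpa using this

theorem bijOn_two_mul_cos_mul_div_two {L : ℝ} (hL : 0 < L) :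
    BijOn (fun y => 2 * cos (y * L / 2)) (Ioo 0 (2 * π / L)) (Ioo (-2) 2) := by
  have hcos : BijOn cos (Ioo 0 π) (Ioo (-1) 1) := cosPartialHomeomorph.bijOn
  have hdouble : BijOn (2 * ·) (Ioo (-1 : ℝ) 1) (Ioo (-2) 2) := by
    have := (mul_right_injective₀ (two_ne_zero' ℝ)).injOn.bijOn_image (s := Ioo (-1) 1)
    rw [image_mul_left_Ioo two_pos] at this
    norm_num at this
    exact this
  exact hdouble.comp (hcos.comp (bijOn_mul_div_two_Ioo hL))

theorem hasDerivAt_two_mul_cos_mul_div_two (L y : ℝ) :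
    HasDerivAt (fun y => 2 * cos (y * L / 2)) (-(L * sin (y * L / 2))) y :=
  (((hasDerivAt_mul_const L).div_const 2).cos.const_mul 2).congr_deriv (by ring)

theorem mul_sin_mul_density_two_mul_cos_eq (p L θ : ℝ) (hp : 0 < p) (hsin : 0 ≤ sin θ) :
    L * sin θ * ((p - 1) / (2 * π) * √(4 - (2 * cos θ) ^ 2) /
      (p ^ ((1 : ℝ) / 2) + p ^ (-(1 : ℝ) / 2) - 2 * cos θ) ^ 2) =
    L / (4 * π) * (2 - 2 * cos (2 * θ)) * (1 - p⁻¹) /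
      (1 - p ^ (-(1 : ℝ) / 2) * (2 * cos θ) + p⁻¹) ^ 2 := by
  obtain ⟨q, hq, rfl⟩ : ∃ q : ℝ, 0 < q ∧ p = q ^ 2 := ⟨√p, sqrt_pos.2 hp, (sq_sqrt hp.le).symm⟩
  have hhalf : (q ^ 2) ^ ((1 : ℝ) / 2) = q := by
    rw [← sqrt_eq_rpow, sqrt_sq hq.le]
  have hneg : (q ^ 2) ^ (-(1 : ℝ) / 2) = q⁻¹ := by
    rw [neg_div, rpow_neg (sq_nonneg q), hhalf]
  have hsqrt : √(4 - (2 * cos θ) ^ 2) = 2 * sin θ := by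
    rw [← sqrt_sq (by positivity : 0 ≤ 2 * sin θ)]
    congr 1
    nlinarith [sin_sq_add_cos_sq θ]
  have hden : 1 - q⁻¹ * (2 * cos θ) + (q ^ 2)⁻¹ = q⁻¹ * (q + q⁻¹ - 2 * cos θ) := by
    field_simp
    ring
  rw [hhalf, hneg, hsqrt, hden, cos_two_mul]
  rcases eq_or_ne (q + q⁻¹ - 2 * cos θ) 0 with hD | hD
  · -- both sides are divisions by zero
    simp [hD]
  · field_simp
    congr 1
    linear_combination (4 * L * (q ^ 2 - 1)) * sin_sq_add_cos_sq θ

theorem pushforward_local_spectral_measure_split (p : ℕ) (hp : p.Prime) :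
    Measure.map (fun y : ℝ => 2 * Real.cos (y * Real.log p / 2))
      ((volume.restrict (Set.Ioo (0 : ℝ) (2 * Real.pi / Real.log p))).withDensity
        (fun y : ℝ => ENNReal.ofReal
          (Real.log p / (4 * Real.pi) * (2 - 2 * Real.cos (y * Real.log p)) *
            (1 - (p : ℝ)⁻¹) /
            (1 - (p : ℝ) ^ (-(1 : ℝ) / 2) * (2 * Real.cos (y * Real.log p / 2)) +
              (p : ℝ)⁻¹) ^ 2))) =
    (volume.restrict (Set.Ioo (-2 : ℝ) 2)).withDensity
      (fun x : ℝ => ENNReal.ofReal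
        (((p : ℝ) - 1) / (2 * Real.pi) * Real.sqrt (4 - x ^ 2) /
          ((p : ℝ) ^ ((1 : ℝ) / 2) + (p : ℝ) ^ (-(1 : ℝ) / 2) - x) ^ 2)) := by
  have hp1 : (1 : ℝ) < p := by exact_mod_cast hp.one_lt
  have hL : 0 < log p := log_pos hp1
  refine map_withDensity_restrict_eq_of_bijOn measurableSet_Ioo (by fun_prop)
    (fun y _ => (hasDerivAt_two_mul_cos_mul_div_two _ y).hasDerivWithinAt)
    (bijOn_two_mul_cos_mul_div_two hL) fun y hy => ?_
  obtain ⟨hθ0, hθπ⟩ := (bijOn_mul_div_two_Ioo hL).mapsTo hy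
  set θ := y * log p / 2
  have hsin : 0 < sin θ := sin_pos_of_pos_of_lt_pi hθ0 hθπ
  rw [show y * log p = 2 * θ by ring, abs_neg, abs_of_pos (by positivity),
    ← ENNReal.ofReal_mul (by positivity), mul_sin_mul_density_two_mul_cos_eq _ _ _ (by positivity) hsin.le]
end
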